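/- Limit point case: let C, γ > 0, let μ ∈ M_a^{C,γ}(ℝ), let z ∈ ℂ with Im z > 0, let a ∈ ℝ ∖ {t_n : n}, and let u_D be the solution of the interface equation −u'' = z u for μ on [a, ∞) with u_D(a) = 0, u_D'(a) = 1. Then ∫_a^∞ |u_D(r)|² dr = ∞; equivalently, the Weyl radius r(z, b) = 1/(2·(Im z)·∫_a^b |u_D|²) tends to 0 as b → ∞. -/

import Mathlib

open Set Filter Topology MeasureTheory

/-- The part of the interval `J` off the atoms `{tₙ}`. -/
def offAtoms (ts : ℕ → ℝ) (J : Set ℝ) : Set ℝ := J \ Set.range ts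

/-- One-sided limits of `u` and its derivative exist at the atom `ts n`, and the
interface conditions `u(tₙ+) = √bₙ · u(tₙ-)`, `u'(tₙ+) = u'(tₙ-)/√bₙ` hold. -/
def InterfaceAt (ts bs : ℕ → ℝ) (S : Set ℝ) (u : ℝ → ℂ) (n : ℕ) : Prop :=
  ∃ uL uR duL duR : ℂ,
    Tendsto u (nhdsWithin (ts n) (S ∩ Iio (ts n))) (nhds uL) ∧
    Tendsto u (nhdsWithin (ts n) (S ∩ Ioi (ts n))) (nhds uR) ∧
    Tendsto (derivWithin u S) (nhdsWithin (ts n) (S ∩ Iio (ts n))) (nhds duL) ∧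
    Tendsto (derivWithin u S) (nhdsWithin (ts n) (S ∩ Ioi (ts n))) (nhds duR) ∧
    uR = (Real.sqrt (bs n) : ℂ) * uL ∧
    duR = duL / (Real.sqrt (bs n) : ℂ)

/-- `u` is a solution of the interface equation `-u'' = z·u` for the atomic measure
with atoms `ts n` and branching numbers `bs n`, on the interval `J`:
`u` is twice continuously differentiable on `J` off the atoms with `-u'' = z·u` there,
and at every atom in the interior of `J` it has one-sided limits satisfying
the interface conditions. -/
def IsInterfaceSolution (ts bs : ℕ → ℝ) (z : ℂ) (J : Set ℝ) (u : ℝ → ℂ) : Prop :=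
  ContDiffOn ℝ 2 u (offAtoms ts J) ∧
  (∀ x ∈ offAtoms ts J,
      -(derivWithin (derivWithin u (offAtoms ts J)) (offAtoms ts J) x) = z * u x) ∧
  (∀ n, ts n ∈ interior J → InterfaceAt ts bs (offAtoms ts J) u n)

/-- The Wronskian `W(f, g)(r) = f'(r)·g(r) - f(r)·g'(r)`, with derivatives taken
within the set `S`. -/
noncomputable def wron (S : Set ℝ) (f g : ℝ → ℂ) (r : ℝ) : ℂ :=
  derivWithin f S r * g r - f r * derivWithin g S r

/-- The Wronskian `W(f, ḡ)(r)` of `f` and the pointwise complex conjugate of `g`. -/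
noncomputable def wronConj (S : Set ℝ) (f g : ℝ → ℂ) (r : ℝ) : ℂ :=
  derivWithin f S r * (starRingEnd ℂ) (g r)
    - f r * (starRingEnd ℂ) (derivWithin g S r)

/-- The atomic measure `μ = Σₙ βₙ δ_{tₙ}` with weights `βₙ = (√bₙ + 1)/(√bₙ - 1)`. -/
noncomputable def treeMeasure (ts bs : ℕ → ℝ) : Measure ℝ :=
  Measure.sum fun n =>
    ENNReal.ofReal ((Real.sqrt (bs n) + 1) / (Real.sqrt (bs n) - 1)) • Measure.dirac (ts n)

/-- `u` is a nontrivial square-integrable solution of the interface equation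
`-u'' = z u` on `[a, ∞)`. -/
def IsL2Solution (ts bs : ℕ → ℝ) (z : ℂ) (a : ℝ) (u : ℝ → ℂ) : Prop :=
  IsInterfaceSolution ts bs z (Ici a) u ∧
  (∃ x ∈ offAtoms ts (Ici a), u x ≠ 0) ∧
  IntegrableOn (fun r => ‖u r‖ ^ 2) (Ioi a) volume

/-! With `W = u' · conj u`, the interface conditions make `W` continuous across the atoms, while
`|u|²` can only jump up there (by the factor `bₙ > 1`); off the atoms `W' = |u'|² - z |u|²`.
Since `W(a) = 0`, this gives `W(y) = ∫ₐʸ |u'|² - z ∫ₐʸ |u|²`. If `∫ₐ^∞ |u|² = M < ∞`, then for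
`y ≥ b > a` we get `|u'| |u| ≥ |Im W| ≥ Im z ∫ₐᵇ |u|² > 0`, which forces `∫ₐʸ |u'|² → ∞` and hence
`Re W → ∞`. As `(|u|²)' = 2 Re W` off the atoms and `|u|²` only jumps up, `|u|²` eventually grows
linearly, contradicting `M < ∞`. -/

section LocallyFinite

variable {D : Set ℝ}

theorem finite_inter_Icc_of_separated {γ : ℝ} (hγ : 0 < γ)
    (hsep : D.Pairwise fun s t => γ ≤ |s - t|) (x y : ℝ) : (D ∩ Icc x y).Finite := by
  refine Finite.of_finite_image (f := fun t => ⌊(t - x) / γ⌋)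
    ((finite_Icc 0 ⌊(y - x) / γ⌋).subset ?_) ?_
  · rintro _ ⟨t, ⟨-, htx, hty⟩, rfl⟩
    exact ⟨Int.floor_nonneg.2 (div_nonneg (by linarith) hγ.le),
      Int.floor_mono (div_le_div_of_nonneg_right (by linarith) hγ.le)⟩
  · intro s hs t ht hst
    by_contra hne
    have hlt := Int.abs_sub_lt_one_of_floor_eq_floor hst
    rw [← sub_div, abs_div, abs_of_pos hγ, div_lt_one hγ, sub_sub_sub_cancel_right] at hlt
    exact (hsep hs.1 ht.1 hne).not_gt hlt

variable (hD : ∀ x y, (D ∩ Icc x y).Finite)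
include hD

theorem eventually_notMem_nhdsNE (p : ℝ) : ∀ᶠ q in 𝓝[≠] p, q ∉ D := by
  have hclosed : IsClosed ((D ∩ Icc (p - 1) (p + 1)) \ {p}) := (hD _ _).sdiff.isClosed
  filter_upwards [nhdsWithin_le_nhds (hclosed.isOpen_compl.mem_nhds (by simp)),
    nhdsWithin_le_nhds (Icc_mem_nhds (by linarith : p - 1 < p) (by linarith : p < p + 1)),
    self_mem_nhdsWithin] with q hq hqI hqp hqD
  exact hq ⟨⟨hqD, hqI⟩, hqp⟩

theorem eventually_notMem_nhds {p : ℝ} (hp : p ∉ D) : ∀ᶠ q in 𝓝 p, q ∉ D := by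
  have := eventually_notMem_nhdsNE hD p
  rw [eventually_nhdsWithin_iff] at this
  filter_upwards [this] with q hq
  by_cases hqp : q = p
  · exact hqp ▸ hp
  · exact hq hqp

theorem countable_of_forall_finite_inter_Icc : D.Countable := by
  have : D = ⋃ n : ℕ, D ∩ Icc (-n) n := by
    ext t
    simp only [mem_iUnion, mem_inter_iff, mem_Icc]
    refine ⟨fun ht => ?_, fun ⟨_, ht, _⟩ => ht⟩
    obtain ⟨n, hn⟩ := exists_nat_ge |t|
    exact ⟨n, ht, abs_le.1 hn⟩
  rw [this]
  exact countable_iUnion fun n => (hD _ _).countable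

theorem induction_on_atoms {x y : ℝ} (hxy : x < y) {P : ℝ → ℝ → Prop}
    (base : ∀ p q, x ≤ p → p < q → q ≤ y → (∀ t ∈ Ioo p q, t ∉ D) → P p q)
    (split : ∀ p t q, x ≤ p → p < t → t < q → q ≤ y → t ∈ D → P p t → P t q → P p q) :
    P x y := by
  suffices ∀ n p q, (D ∩ Ioo p q).ncard = n → x ≤ p → p < q → q ≤ y → P p q from
    this _ x y rfl le_rfl hxy le_rfl
  intro n
  induction n using Nat.strong_induction_on with
  | _ n ih =>
    intro p q hn hxp hpq hqy
    by_cases hatom : ∃ t ∈ D, t ∈ Ioo p q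
    · obtain ⟨t, htD, hpt, htq⟩ := hatom
      have hfin : (D ∩ Ioo p q).Finite :=
        (hD p q).subset (inter_subset_inter_right _ Ioo_subset_Icc_self)
      have hsmaller : ∀ p' q', Ioo p' q' ⊆ Ioo p q → t ∉ Ioo p' q' →
          (D ∩ Ioo p' q').ncard < n := fun p' q' hsub ht =>
        hn ▸ ncard_lt_ncard (ssubset_of_subset_not_subset (inter_subset_inter_right _ hsub)
          fun h => ht (h ⟨htD, hpt, htq⟩).2) hfin
      exact split p t q hxp hpt htq hqy htD
        (ih _ (hsmaller p t (Ioo_subset_Ioo_right htq.le) fun h => h.2.false) _ _ rfl hxp hpt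
          (htq.le.trans hqy))
        (ih _ (hsmaller t q (Ioo_subset_Ioo_left hpt.le) fun h => h.1.false) _ _ rfl
          (hxp.trans hpt.le) htq hqy)
    · push Not at hatom
      exact base p q hxp hpq hqy fun t ht htD => hatom t htD ht

end LocallyFinite

section PiecewiseCalculus

variable {E : Type*} [NormedAddCommGroup E]

theorem intervalIntegrable_of_continuousOn_Ioo_of_tendsto {f : ℝ → E} {x y : ℝ} {lx ly : E}
    (hxy : x < y) (hf : ContinuousOn f (Ioo x y)) (hx : Tendsto f (𝓝[>] x) (𝓝 lx))
    (hy : Tendsto f (𝓝[<] y) (𝓝 ly)) : IntervalIntegrable f volume x y := by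
  have hext := continuousOn_Icc_extendFrom_Ioo hf hx hy
  rw [intervalIntegrable_iff_integrableOn_Ioo_of_le hxy.le]
  exact (hext.integrableOn_Icc.mono_set Ioo_subset_Icc_self).congr_fun
    (fun r hr => extendFrom_extends hf r hr) measurableSet_Ioo

theorem IntervalIntegrable.mono_set_of_le {f : ℝ → E} {x y p q : ℝ}
    (hf : IntervalIntegrable f volume x y) (hxp : x ≤ p) (hpq : p ≤ q) (hqy : q ≤ y) :
    IntervalIntegrable f volume p q :=
  hf.mono_set (uIcc_subset_uIcc (mem_uIcc_of_le hxp (hpq.trans hqy))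
    (mem_uIcc_of_le (hxp.trans hpq) hqy))

theorem integral_mono_on_diff_countable {f g : ℝ → ℝ} {D : Set ℝ} {x y : ℝ}
    (hD : D.Countable) (hxy : x ≤ y) (hf : IntervalIntegrable f volume x y)
    (hg : IntervalIntegrable g volume x y) (hfg : ∀ r ∈ Icc x y \ D, f r ≤ g r) :
    ∫ r in x..y, f r ≤ ∫ r in x..y, g r := by
  refine intervalIntegral.integral_mono_ae_restrict hxy hf hg ?_
  filter_upwards [ae_restrict_mem measurableSet_Icc, ae_restrict_of_ae (hD.ae_notMem volume)]
    with r hr hrD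
  exact hfg r ⟨hr, hrD⟩

variable {D : Set ℝ} (hD : ∀ x y, (D ∩ Icc x y).Finite)
include hD

theorem intervalIntegrable_of_continuousOn_diff {f : ℝ → E} {x y : ℝ} (hxy : x ≤ y)
    (hf : ContinuousOn f (Ioo x y \ D))
    (hGT : ∀ p ∈ Ico x y, ∃ l, Tendsto f (𝓝[>] p) (𝓝 l))
    (hLT : ∀ p ∈ Ioc x y, ∃ l, Tendsto f (𝓝[<] p) (𝓝 l)) :
    IntervalIntegrable f volume x y := by
  rcases hxy.eq_or_lt with rfl | hxy
  · exact IntervalIntegrable.refl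
  refine induction_on_atoms hD hxy (fun p q hxp hpq hqy hfree => ?_)
    fun p t q _ _ _ _ _ hpt htq => hpt.trans htq
  obtain ⟨lp, hlp⟩ := hGT p ⟨hxp, hpq.trans_le hqy⟩
  obtain ⟨lq, hlq⟩ := hLT q ⟨hxp.trans_lt hpq, hqy⟩
  exact intervalIntegrable_of_continuousOn_Ioo_of_tendsto hpq
    (hf.mono fun r hr => ⟨Ioo_subset_Ioo hxp hqy hr, hfree r hr⟩) hlp hlq

variable [NormedSpace ℝ E] [CompleteSpace E]

theorem integral_eq_sub_of_hasDerivAt_of_tendsto_nhdsNE {F φ : ℝ → E} {x y : ℝ} {fx fy : E}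
    (hxy : x < y) (hF : ∀ p ∈ Ioo x y \ D, HasDerivAt F (φ p) p)
    (hφ : IntervalIntegrable φ volume x y)
    (hjump : ∀ t ∈ D ∩ Ioo x y, ∃ l, Tendsto F (𝓝[≠] t) (𝓝 l))
    (hx : Tendsto F (𝓝[>] x) (𝓝 fx)) (hy : Tendsto F (𝓝[<] y) (𝓝 fy)) :
    ∫ r in x..y, φ r = fy - fx := by
  refine induction_on_atoms hD hxy (P := fun p q => ∀ fp fq, Tendsto F (𝓝[>] p) (𝓝 fp) →
    Tendsto F (𝓝[<] q) (𝓝 fq) → ∫ r in p..q, φ r = fq - fp)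
    (fun p q hxp hpq hqy hfree fp fq hp hq => ?_) ?_ fx fy hx hy
  · exact intervalIntegral.integral_eq_sub_of_hasDerivAt_of_tendsto hpq
      (fun r hr => hF r ⟨Ioo_subset_Ioo hxp hqy hr, hfree r hr⟩)
      (hφ.mono_set_of_le hxp hpq.le hqy) hp hq
  · intro p t q hxp hpt htq hqy htD hpt' htq' fp fq hp hq
    obtain ⟨l, hl⟩ := hjump t ⟨htD, hxp.trans_lt hpt, htq.trans_le hqy⟩
    rw [← intervalIntegral.integral_add_adjacent_intervals
      (hφ.mono_set_of_le hxp hpt.le (htq.le.trans hqy))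
      (hφ.mono_set_of_le (hxp.trans hpt.le) htq.le hqy),
      hpt' fp l hp (hl.mono_left (nhdsLT_le_nhdsNE t)),
      htq' l fq (hl.mono_left (nhdsGT_le_nhdsNE t)) hq]
    abel

theorem integral_le_sub_of_hasDerivAt_of_jumps_nonneg {F φ : ℝ → ℝ} {x y fx fy : ℝ}
    (hxy : x < y) (hF : ∀ p ∈ Ioo x y \ D, HasDerivAt F (φ p) p)
    (hφ : IntervalIntegrable φ volume x y)
    (hjump : ∀ t ∈ D ∩ Ioo x y, ∃ lL lR, Tendsto F (𝓝[<] t) (𝓝 lL) ∧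
      Tendsto F (𝓝[>] t) (𝓝 lR) ∧ lL ≤ lR)
    (hx : Tendsto F (𝓝[>] x) (𝓝 fx)) (hy : Tendsto F (𝓝[<] y) (𝓝 fy)) :
    ∫ r in x..y, φ r ≤ fy - fx := by
  refine induction_on_atoms hD hxy (P := fun p q => ∀ fp fq, Tendsto F (𝓝[>] p) (𝓝 fp) →
    Tendsto F (𝓝[<] q) (𝓝 fq) → ∫ r in p..q, φ r ≤ fq - fp)
    (fun p q hxp hpq hqy hfree fp fq hp hq => ?_) ?_ fx fy hx hy
  · exact (intervalIntegral.integral_eq_sub_of_hasDerivAt_of_tendsto hpq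
      (fun r hr => hF r ⟨Ioo_subset_Ioo hxp hqy hr, hfree r hr⟩)
      (hφ.mono_set_of_le hxp hpq.le hqy)
      hp hq).le
  · intro p t q hxp hpt htq hqy htD hpt' htq' fp fq hp hq
    obtain ⟨lL, lR, hL, hR, hLR⟩ := hjump t ⟨htD, hxp.trans_lt hpt, htq.trans_le hqy⟩
    rw [← intervalIntegral.integral_add_adjacent_intervals
      (hφ.mono_set_of_le hxp hpt.le (htq.le.trans hqy))
      (hφ.mono_set_of_le (hxp.trans hpt.le) htq.le hqy)]
    linarith [hpt' fp lL hp hL, htq' lR fq hR hq]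

end PiecewiseCalculus

open ComplexConjugate

/-- `v` plays the role of `u'`: off the atoms `D` the pair `(u, v)` solves `u' = v`, `v' = -z u`
on `[a, ∞)`, and across an atom `t > a` it jumps from `(u_L, v_L)` to `(s u_L, v_L / s)`; this is
the interface condition with `s = √b`. -/
structure IsJumpSolution (D : Set ℝ) (z : ℂ) (a : ℝ) (u v : ℝ → ℂ) : Prop where
  locallyFinite : ∀ x y, (D ∩ Icc x y).Finite
  start_notMem : a ∉ D
  hasDerivWithinAt : ∀ p ∈ Ici a \ D, HasDerivWithinAt u (v p) (Ici a) p
  hasDerivWithinAt_snd : ∀ p ∈ Ici a \ D, HasDerivWithinAt v (-(z * u p)) (Ici a) p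
  jump : ∀ t ∈ D, a < t → ∃ s : ℝ, 1 ≤ s ∧ ∃ uL vL : ℂ,
    Tendsto (fun r => (u r, v r)) (𝓝[<] t) (𝓝 (uL, vL)) ∧
    Tendsto (fun r => (u r, v r)) (𝓝[>] t) (𝓝 ((s : ℂ) * uL, vL / s))

theorem IsInterfaceSolution.isJumpSolution {ts bs : ℕ → ℝ} {z : ℂ} {a : ℝ} {u : ℝ → ℂ}
    (hu : IsInterfaceSolution ts bs z (Ici a) u) (hD : ∀ x y, (range ts ∩ Icc x y).Finite)
    (hbs : ∀ n, 1 ≤ bs n) (ha : a ∉ range ts) :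
    IsJumpSolution (range ts) z a u (derivWithin u (offAtoms ts (Ici a))) := by
  obtain ⟨hC2, hode, hinterface⟩ := hu
  have hS : ∀ p ∉ range ts, offAtoms ts (Ici a) ∈ 𝓝[Ici a] p := fun p hp =>
    inter_mem_nhdsWithin _ (eventually_notMem_nhds hD hp)
  have hSt : ∀ t, a < t → offAtoms ts (Ici a) ∈ 𝓝[≠] t := fun t hat =>
    inter_mem (mem_nhdsWithin_of_mem_nhds (Ici_mem_nhds hat)) (eventually_notMem_nhdsNE hD t)
  have hSud : UniqueDiffOn ℝ (offAtoms ts (Ici a)) := fun p hp =>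
    (uniqueDiffOn_Ici a p hp.1).mono_nhds (nhdsWithin_le_iff.2 (hS p hp.2))
  have hv : ContDiffOn ℝ 1 (derivWithin u (offAtoms ts (Ici a))) (offAtoms ts (Ici a)) :=
    hC2.derivWithin hSud (by norm_num)
  refine ⟨hD, ha, fun p hp => ?_, fun p hp => ?_, fun t ht hat => ?_⟩
  · exact (hC2.differentiableOn (by norm_num) p hp).hasDerivWithinAt.mono_of_mem_nhdsWithin
      (hS p hp.2)
  · rw [← neg_eq_iff_eq_neg.1 (hode p hp)]
    exact (hv.differentiableOn one_ne_zero p hp).hasDerivWithinAt.mono_of_mem_nhdsWithin (hS p hp.2)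
  · obtain ⟨n, rfl⟩ := ht
    obtain ⟨uL, uR, vL, vR, huL, huR, hvL, hvR, rfl, rfl⟩ :=
      hinterface n (by rwa [interior_Ici])
    have hL : 𝓝[offAtoms ts (Ici a) ∩ Iio (ts n)] (ts n) = 𝓝[<] (ts n) := by
      rw [inter_comm, nhdsWithin_inter_of_mem' (nhdsLT_le_nhdsNE _ (hSt _ hat))]
    have hR : 𝓝[offAtoms ts (Ici a) ∩ Ioi (ts n)] (ts n) = 𝓝[>] (ts n) := by
      rw [inter_comm, nhdsWithin_inter_of_mem' (nhdsGT_le_nhdsNE _ (hSt _ hat))]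
    rw [hL] at huL hvL
    rw [hR] at huR hvR
    exact ⟨√(bs n), Real.one_le_sqrt.2 (hbs n), uL, vL, huL.prodMk_nhds hvL,
      huR.prodMk_nhds hvR⟩

namespace IsJumpSolution

variable {D : Set ℝ} {z : ℂ} {a : ℝ} {u v : ℝ → ℂ} (h : IsJumpSolution D z a u v)
include h

theorem hasDerivAt {p : ℝ} (hp : p ∈ Ioi a \ D) : HasDerivAt u (v p) p :=
  (h.hasDerivWithinAt p ⟨hp.1.out.le, hp.2⟩).hasDerivAt (Ici_mem_nhds hp.1)

theorem hasDerivAt_snd {p : ℝ} (hp : p ∈ Ioi a \ D) : HasDerivAt v (-(z * u p)) p :=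
  (h.hasDerivWithinAt_snd p ⟨hp.1.out.le, hp.2⟩).hasDerivAt (Ici_mem_nhds hp.1)

theorem continuousAt {p : ℝ} (hp : p ∈ Ioi a \ D) : ContinuousAt (fun r => (u r, v r)) p :=
  (h.hasDerivAt hp).continuousAt.prodMk (h.hasDerivAt_snd hp).continuousAt

theorem tendsto_nhdsGT_start : Tendsto (fun r => (u r, v r)) (𝓝[>] a) (𝓝 (u a, v a)) := by
  have hstart : a ∈ Ici a \ D := ⟨mem_Ici.2 le_rfl, h.start_notMem⟩
  exact ((h.hasDerivWithinAt a hstart).continuousWithinAt.prodMk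
    (h.hasDerivWithinAt_snd a hstart).continuousWithinAt).tendsto.mono_left
    (nhdsWithin_mono _ Ioi_subset_Ici_self)

theorem exists_tendsto_nhdsGT {p : ℝ} (hp : a ≤ p) :
    ∃ l, Tendsto (fun r => (u r, v r)) (𝓝[>] p) (𝓝 l) := by
  rcases hp.eq_or_lt with rfl | hp
  · exact ⟨_, h.tendsto_nhdsGT_start⟩
  by_cases hpD : p ∈ D
  · obtain ⟨s, -, uL, vL, -, hR⟩ := h.jump p hpD hp
    exact ⟨_, hR⟩
  · exact ⟨_, (h.continuousAt ⟨hp, hpD⟩).tendsto.mono_left nhdsWithin_le_nhds⟩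

theorem exists_tendsto_nhdsLT {p : ℝ} (hp : a < p) :
    ∃ l, Tendsto (fun r => (u r, v r)) (𝓝[<] p) (𝓝 l) := by
  by_cases hpD : p ∈ D
  · obtain ⟨s, -, uL, vL, hL, -⟩ := h.jump p hpD hp
    exact ⟨_, hL⟩
  · exact ⟨_, (h.continuousAt ⟨hp, hpD⟩).tendsto.mono_left nhdsWithin_le_nhds⟩

theorem intervalIntegrable_comp {E : Type*} [NormedAddCommGroup E] {Φ : ℂ × ℂ → E}
    (hΦ : Continuous Φ) {x y : ℝ} (hx : a ≤ x) (hxy : x ≤ y) :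
    IntervalIntegrable (fun r => Φ (u r, v r)) volume x y :=
  intervalIntegrable_of_continuousOn_diff h.locallyFinite hxy
    (fun _ hp =>
      (hΦ.continuousAt.comp (h.continuousAt ⟨hx.trans_lt hp.1.1, hp.2⟩)).continuousWithinAt)
    (fun _ hp => (h.exists_tendsto_nhdsGT (hx.trans hp.1)).imp' Φ
      fun l hl => (hΦ.tendsto l).comp hl)
    (fun _ hp => (h.exists_tendsto_nhdsLT (hx.trans_lt hp.1)).imp' Φ
      fun l hl => (hΦ.tendsto l).comp hl)

theorem hasDerivAt_mul_conj {p : ℝ} (hp : p ∈ Ioi a \ D) :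
    HasDerivAt (fun r => v r * conj (u r))
      (((‖v p‖ ^ 2 : ℝ) : ℂ) - z * ((‖u p‖ ^ 2 : ℝ) : ℂ)) p := by
  have hconj : HasDerivAt (fun r => conj (u r)) (conj (v p)) p := (h.hasDerivAt hp).star
  refine ((h.hasDerivAt_snd hp).mul hconj).congr_deriv ?_
  push_cast
  rw [← Complex.mul_conj', ← Complex.mul_conj']
  ring

theorem exists_tendsto_mul_conj_nhdsNE {t : ℝ} (ht : t ∈ D) (hat : a < t) :
    ∃ l, Tendsto (fun r => v r * conj (u r)) (𝓝[≠] t) (𝓝 l) := by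
  obtain ⟨s, hs, uL, vL, hL, hR⟩ := h.jump t ht hat
  have hΦ : Continuous fun w : ℂ × ℂ => w.2 * conj w.1 := by fun_prop
  have hs0 : (s : ℂ) ≠ 0 := Complex.ofReal_ne_zero.2 (by linarith)
  refine ⟨vL * conj uL, ?_⟩
  rw [← nhdsLT_sup_nhdsGT]
  refine ((hΦ.tendsto _).comp hL).sup ?_
  convert (hΦ.tendsto _).comp hR using 2
  simp only [map_mul, Complex.conj_ofReal]
  field_simp

theorem mul_conj_eq_integral (hua : u a = 0) {y : ℝ} (hy : y ∈ Ioi a \ D) :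
    v y * conj (u y) =
      ((∫ r in a..y, ‖v r‖ ^ 2 : ℝ) : ℂ) - z * ((∫ r in a..y, ‖u r‖ ^ 2 : ℝ) : ℂ) := by
  have hW : Continuous fun w : ℂ × ℂ => w.2 * conj w.1 := by fun_prop
  have hgreen := integral_eq_sub_of_hasDerivAt_of_tendsto_nhdsNE h.locallyFinite hy.1
    (fun p hp => h.hasDerivAt_mul_conj ⟨hp.1.1, hp.2⟩)
    (h.intervalIntegrable_comp (Φ := fun w => ((‖w.2‖ ^ 2 : ℝ) : ℂ) - z * ((‖w.1‖ ^ 2 : ℝ) : ℂ))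
      (by fun_prop) le_rfl hy.1.out.le)
    (fun t ht => h.exists_tendsto_mul_conj_nhdsNE ht.1 ht.2.1)
    ((hW.tendsto _).comp h.tendsto_nhdsGT_start)
    ((hW.tendsto _).comp ((h.continuousAt hy).tendsto.mono_left nhdsWithin_le_nhds))
  simp only [hua, map_zero, mul_zero, sub_zero] at hgreen
  rw [← hgreen, intervalIntegral.integral_sub, intervalIntegral.integral_const_mul,
    intervalIntegral.integral_ofReal, intervalIntegral.integral_ofReal]
  · exact h.intervalIntegrable_comp (Φ := fun w => ((‖w.2‖ ^ 2 : ℝ) : ℂ)) (by fun_prop) le_rfl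
      hy.1.out.le
  · exact h.intervalIntegrable_comp (Φ := fun w => z * ((‖w.1‖ ^ 2 : ℝ) : ℂ)) (by fun_prop) le_rfl
      hy.1.out.le

theorem hasDerivAt_norm_sq {p : ℝ} (hp : p ∈ Ioi a \ D) :
    HasDerivAt (fun r => ‖u r‖ ^ 2) (2 * (v p * conj (u p)).re) p := by
  simpa [Complex.inner] using (h.hasDerivAt hp).norm_sq

theorem jump_norm_sq {t : ℝ} (ht : t ∈ D) (hat : a < t) :
    ∃ lL lR, Tendsto (fun r => ‖u r‖ ^ 2) (𝓝[<] t) (𝓝 lL) ∧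
      Tendsto (fun r => ‖u r‖ ^ 2) (𝓝[>] t) (𝓝 lR) ∧ lL ≤ lR := by
  obtain ⟨s, hs, uL, vL, hL, hR⟩ := h.jump t ht hat
  have hΦ : Continuous fun w : ℂ × ℂ => ‖w.1‖ ^ 2 := by fun_prop
  have h1 := (hΦ.tendsto (uL, vL)).comp hL
  have h2 := (hΦ.tendsto ((s : ℂ) * uL, vL / s)).comp hR
  refine ⟨‖uL‖ ^ 2, ‖(s : ℂ) * uL‖ ^ 2, h1, h2, ?_⟩
  rw [norm_mul, Complex.norm_real, Real.norm_of_nonneg (by linarith), mul_pow]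
  exact le_mul_of_one_le_left (by positivity) (one_le_pow₀ hs)

theorem norm_sq_add_integral_le {x y : ℝ} (hx : x ∈ Ioi a \ D) (hy : y ∈ Ioi a \ D)
    (hxy : x < y) :
    ‖u x‖ ^ 2 + ∫ r in x..y, 2 * (v r * conj (u r)).re ≤ ‖u y‖ ^ 2 := by
  have := integral_le_sub_of_hasDerivAt_of_jumps_nonneg h.locallyFinite hxy
    (fun p hp => h.hasDerivAt_norm_sq ⟨hx.1.out.trans hp.1.1, hp.2⟩)
    (h.intervalIntegrable_comp (Φ := fun w => 2 * (w.2 * conj w.1).re) (by fun_prop) hx.1.out.le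
      hxy.le)
    (fun t ht => h.jump_norm_sq ht.1 (hx.1.out.trans ht.2.1))
    ((h.hasDerivAt_norm_sq hx).continuousAt.tendsto.mono_left nhdsWithin_le_nhds)
    ((h.hasDerivAt_norm_sq hy).continuousAt.tendsto.mono_left nhdsWithin_le_nhds)
  linarith

theorem intervalIntegrable_norm_sq {x y : ℝ} (hx : a ≤ x) (hxy : x ≤ y) :
    IntervalIntegrable (fun r => ‖u r‖ ^ 2) volume x y :=
  h.intervalIntegrable_comp (Φ := fun w => ‖w.1‖ ^ 2) (by fun_prop) hx hxy

theorem exists_integral_norm_sq_pos (hva : v a ≠ 0) : ∃ b > a, 0 < ∫ r in a..b, ‖u r‖ ^ 2 := by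
  have hne : ∀ᶠ r in 𝓝[Ici a \ {a}] a, u r ≠ 0 :=
    (h.hasDerivWithinAt a ⟨mem_Ici.2 le_rfl, h.start_notMem⟩).eventually_ne hva
  replace hne : ∀ᶠ r in 𝓝[>] a, u r ≠ 0 :=
    hne.filter_mono (nhdsWithin_mono a fun r (hr : a < r) =>
      show r ∈ Ici a \ {a} from ⟨mem_Ici.2 hr.le, hr.ne'⟩)
  obtain ⟨b, hab, hb⟩ := mem_nhdsGT_iff_exists_Ioo_subset.1 hne
  exact ⟨b, hab, intervalIntegral.intervalIntegral_pos_of_pos_on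
    (h.intervalIntegrable_norm_sq le_rfl hab.out.le)
    (fun r hr => by have := hb hr; positivity) hab⟩

theorem integral_norm_sq_mono {x y : ℝ} (hx : a ≤ x) (hxy : x ≤ y) :
    ∫ r in a..x, ‖u r‖ ^ 2 ≤ ∫ r in a..y, ‖u r‖ ^ 2 :=
  intervalIntegral.integral_mono_interval le_rfl hx hxy
    (Eventually.of_forall fun r => sq_nonneg ‖u r‖)
    (h.intervalIntegrable_norm_sq le_rfl (hx.trans hxy))

theorem le_integral_norm_sq_snd (hua : u a = 0) {M : ℝ}
    (hM : ∀ y ≥ a, ∫ r in a..y, ‖u r‖ ^ 2 ≤ M) {b y : ℝ} (hab : a < b) (hby : b ≤ y) :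
    2 * (|z.im| * ∫ r in a..b, ‖u r‖ ^ 2) * (y - b) - M ≤ ∫ r in a..y, ‖v r‖ ^ 2 := by
  have hpt : ∀ w ∈ Icc b y \ D,
      2 * (|z.im| * ∫ r in a..b, ‖u r‖ ^ 2) ≤ ‖v w‖ ^ 2 + ‖u w‖ ^ 2 := by
    intro w hw
    have hA0 : 0 ≤ ∫ r in a..w, ‖u r‖ ^ 2 :=
      intervalIntegral.integral_nonneg (hab.le.trans hw.1.1) fun _ _ => sq_nonneg _
    have him : |(v w * conj (u w)).im| = |z.im| * ∫ r in a..w, ‖u r‖ ^ 2 := by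
      rw [h.mul_conj_eq_integral hua ⟨hab.trans_le hw.1.1, hw.2⟩]
      simp [abs_mul, abs_of_nonneg hA0]
    calc 2 * (|z.im| * ∫ r in a..b, ‖u r‖ ^ 2)
        ≤ 2 * (|z.im| * ∫ r in a..w, ‖u r‖ ^ 2) := by
          gcongr
          exact h.integral_norm_sq_mono hab.le hw.1.1
      _ = 2 * |(v w * conj (u w)).im| := by rw [him]
      _ ≤ 2 * (‖v w‖ * ‖u w‖) := by
          gcongr
          simpa using Complex.abs_im_le_norm (v w * conj (u w))
      _ ≤ ‖v w‖ ^ 2 + ‖u w‖ ^ 2 := by nlinarith [sq_nonneg (‖v w‖ - ‖u w‖)]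
  have hv : ∀ {x y}, a ≤ x → x ≤ y → IntervalIntegrable (fun r => ‖v r‖ ^ 2) volume x y :=
    h.intervalIntegrable_comp (Φ := fun w => ‖w.2‖ ^ 2) (by fun_prop)
  have hint := integral_mono_on_diff_countable
    (countable_of_forall_finite_inter_Icc h.locallyFinite) hby intervalIntegrable_const
    ((hv hab.le hby).add (h.intervalIntegrable_norm_sq hab.le hby)) hpt
  rw [intervalIntegral.integral_const, smul_eq_mul, intervalIntegral.integral_add
    (hv hab.le hby) (h.intervalIntegrable_norm_sq hab.le hby),
    ← intervalIntegral.integral_interval_sub_left (hv le_rfl (hab.le.trans hby))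
      (hv le_rfl hab.le),
    ← intervalIntegral.integral_interval_sub_left (h.intervalIntegrable_norm_sq le_rfl
      (hab.le.trans hby)) (h.intervalIntegrable_norm_sq le_rfl hab.le)] at hint
  have hB0 : 0 ≤ ∫ r in a..b, ‖v r‖ ^ 2 :=
    intervalIntegral.integral_nonneg hab.le fun _ _ => sq_nonneg _
  have hA0 : 0 ≤ ∫ r in a..b, ‖u r‖ ^ 2 :=
    intervalIntegral.integral_nonneg hab.le fun _ _ => sq_nonneg _
  linarith [hM y (hab.le.trans hby)]

theorem exists_one_le_re_mul_conj (hz : z.im ≠ 0) (hua : u a = 0) (hva : v a ≠ 0) {M : ℝ}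
    (hM : ∀ y ≥ a, ∫ r in a..y, ‖u r‖ ^ 2 ≤ M) :
    ∃ R > a, ∀ r ∈ Ioi R \ D, 1 ≤ (v r * conj (u r)).re := by
  obtain ⟨b, hab, hAb⟩ := h.exists_integral_norm_sq_pos hva
  have hc : 0 < 2 * (|z.im| * ∫ r in a..b, ‖u r‖ ^ 2) := by positivity
  have hM0 : 0 < M := hAb.trans_le (hM b hab.le)
  refine ⟨b + (1 + M + |z.re| * M) / (2 * (|z.im| * ∫ r in a..b, ‖u r‖ ^ 2)),
    by have : 0 < (1 + M + |z.re| * M) / _ := div_pos (by positivity) hc; linarith,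
    fun w hw => ?_⟩
  have hbw : b ≤ w := le_trans (le_add_of_nonneg_right (by positivity)) hw.1.out.le
  have hre : (v w * conj (u w)).re =
      (∫ r in a..w, ‖v r‖ ^ 2) - z.re * ∫ r in a..w, ‖u r‖ ^ 2 := by
    rw [h.mul_conj_eq_integral hua ⟨hab.trans_le hbw, hw.2⟩]
    simp
  have hA0 : 0 ≤ ∫ r in a..w, ‖u r‖ ^ 2 :=
    intervalIntegral.integral_nonneg (hab.le.trans hbw) fun _ _ => sq_nonneg _
  have hAM := hM w (hab.le.trans hbw)
  have hzA : z.re * ∫ r in a..w, ‖u r‖ ^ 2 ≤ |z.re| * M :=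
    (mul_le_mul_of_nonneg_right (le_abs_self _) hA0).trans (by gcongr)
  have hlarge : 1 + M + |z.re| * M ≤ 2 * (|z.im| * ∫ r in a..b, ‖u r‖ ^ 2) * (w - b) := by
    rw [← div_le_iff₀' hc]
    linarith [hw.1.out]
  linarith [h.le_integral_norm_sq_snd hua hM hab hbw]

theorem two_mul_sub_le_norm_sq {x₀ : ℝ} (hx₀ : x₀ ∈ Ioi a \ D)
    (hre : ∀ r ∈ Ici x₀ \ D, 1 ≤ (v r * conj (u r)).re) :
    ∀ y ∈ Ioi x₀ \ D, 2 * (y - x₀) ≤ ‖u y‖ ^ 2 := by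
  intro y hy
  have hgrow := h.norm_sq_add_integral_le hx₀ ⟨hx₀.1.out.trans hy.1, hy.2⟩ hy.1
  have hint := integral_mono_on_diff_countable (f := fun _ => (2 : ℝ))
    (g := fun r => 2 * (v r * conj (u r)).re)
    (countable_of_forall_finite_inter_Icc h.locallyFinite) hy.1.out.le intervalIntegrable_const
    (h.intervalIntegrable_comp (Φ := fun w => 2 * (w.2 * conj w.1).re) (by fun_prop)
      hx₀.1.out.le hy.1.out.le)
    fun r hr => by linarith [hre r ⟨hr.1.1, hr.2⟩]
  rw [intervalIntegral.integral_const, smul_eq_mul] at hint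
  nlinarith [sq_nonneg ‖u x₀‖]

theorem exists_lt_integral_norm_sq (hz : z.im ≠ 0) (hua : u a = 0) (hva : v a ≠ 0) (M : ℝ) :
    ∃ y ≥ a, M < ∫ r in a..y, ‖u r‖ ^ 2 := by
  by_contra! hM
  obtain ⟨R, haR, hR⟩ := h.exists_one_le_re_mul_conj hz hua hva hM
  obtain ⟨x₀, hx₀, hx₀D⟩ :=
    (Ioo_infinite (lt_add_one R)).exists_notMem_finite (h.locallyFinite R (R + 1))
  have hax₀ : a < x₀ := haR.trans hx₀.1
  have hgrow := h.two_mul_sub_le_norm_sq ⟨hax₀, fun hD => hx₀D ⟨hD, Ioo_subset_Icc_self hx₀⟩⟩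
    fun r hr => hR r ⟨hx₀.1.trans_le hr.1, hr.2⟩
  have hy : x₀ + 1 ≤ x₀ + 2 + |M| := by linarith [abs_nonneg M]
  have hlow := integral_mono_on_diff_countable (f := fun _ => (2 : ℝ))
    (countable_of_forall_finite_inter_Icc h.locallyFinite) hy intervalIntegrable_const
    (h.intervalIntegrable_norm_sq (by linarith) hy)
    fun r hr => by linarith [hgrow r ⟨show x₀ < r by linarith [hr.1.1], hr.2⟩, hr.1.1]
  have hsub := intervalIntegral.integral_mono_interval (by linarith) hy le_rfl
    (Eventually.of_forall fun r => sq_nonneg ‖u r‖)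
    (h.intervalIntegrable_norm_sq le_rfl (by linarith))
  rw [intervalIntegral.integral_const, smul_eq_mul] at hlow
  linarith [hM (x₀ + 2 + |M|) (by linarith), le_abs_self M]

theorem tendsto_integral_norm_sq_atTop (hz : z.im ≠ 0) (hua : u a = 0) (hva : v a ≠ 0) :
    Tendsto (fun y => ∫ r in a..y, ‖u r‖ ^ 2) atTop atTop := by
  refine tendsto_atTop.2 fun M => ?_
  obtain ⟨y₀, hy₀, hM⟩ := h.exists_lt_integral_norm_sq hz hua hva M
  filter_upwards [eventually_ge_atTop y₀] with y hy
  exact hM.le.trans (h.integral_norm_sq_mono hy₀ hy)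

end IsJumpSolution

theorem lintegral_Ioi_eq_top_of_tendsto_integral {f : ℝ → ℝ} {a : ℝ} (hf₀ : ∀ r, 0 ≤ f r)
    (hfi : ∀ y ≥ a, IntervalIntegrable f volume a y)
    (hf : Tendsto (fun y => ∫ r in a..y, f r) atTop atTop) :
    ∫⁻ r in Ioi a, ENNReal.ofReal (f r) = ⊤ := by
  refine ENNReal.eq_top_of_forall_nnreal_le fun K => ?_
  obtain ⟨y, hKy, hay⟩ := ((hf.eventually_ge_atTop K).and (eventually_ge_atTop a)).exists
  calc (K : ENNReal) = ENNReal.ofReal K := (ENNReal.ofReal_coe_nnreal).symm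
    _ ≤ ENNReal.ofReal (∫ r in a..y, f r) := ENNReal.ofReal_le_ofReal hKy
    _ = ∫⁻ r in Ioc a y, ENNReal.ofReal (f r) := by
      rw [intervalIntegral.integral_of_le hay,
        ofReal_integral_eq_lintegral_ofReal (hfi y hay).1 (Eventually.of_forall hf₀)]
    _ ≤ ∫⁻ r in Ioi a, ENNReal.ofReal (f r) := lintegral_mono_set Ioc_subset_Ioi_self

theorem limit_point_case_general
    (γ : ℝ) (hγ : 0 < γ)
    (ts bs : ℕ → ℝ)
    (hsep : ∀ n m, n ≠ m → γ ≤ |ts n - ts m|)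
    (hbs : ∀ n, 1 < bs n)
    (z : ℂ) (hz : 0 < z.im) (a : ℝ) (ha : a ∉ Set.range ts)
    (uD : ℝ → ℂ)
    (huD : IsInterfaceSolution ts bs z (Ici a) uD)
    (hDa : uD a = 0) (hDa' : derivWithin uD (offAtoms ts (Ici a)) a = 1) :
    (∫⁻ r in Ioi a, ENNReal.ofReal (‖uD r‖ ^ 2)) = ⊤ ∧
    Tendsto (fun b : ℝ => 1 / (2 * z.im * ∫ r in a..b, ‖uD r‖ ^ 2)) atTop (nhds 0) := by
  have hD : ∀ x y, (range ts ∩ Icc x y).Finite := finite_inter_Icc_of_separated hγ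
    (by rintro _ ⟨n, rfl⟩ _ ⟨m, rfl⟩ hnm; exact hsep n m fun h => hnm (h ▸ rfl))
  have hsol := huD.isJumpSolution hD (fun n => (hbs n).le) ha
  have hA := hsol.tendsto_integral_norm_sq_atTop hz.ne' hDa (hDa' ▸ one_ne_zero)
  refine ⟨lintegral_Ioi_eq_top_of_tendsto_integral (fun r => sq_nonneg ‖uD r‖)
    (fun y hy => hsol.intervalIntegrable_norm_sq le_rfl hy) hA, ?_⟩
  simpa only [one_div, Function.comp_def] using
    tendsto_inv_atTop_zero.comp (hA.const_mul_atTop (by positivity))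

/-- limit point case: for `μ ∈ M_a^{C,γ}(ℝ)`, `Im z > 0` and the solution
`u_D` on `[a, ∞)` with `u_D(a) = 0`, `u_D'(a) = 1`, one has `∫ₐ^∞ |u_D|² = ∞`;
equivalently, the Weyl radius `r(z, b) = 1/(2·Im z·∫ₐ^b |u_D|²)` tends to `0` as `b → ∞`. -/
theorem limit_point_case
    (C γ : ℝ) (hC : 0 < C) (hγ : 0 < γ)
    (ts bs : ℕ → ℝ)
    (hsep : ∀ n m, n ≠ m → γ ≤ |ts n - ts m|)
    (hbs : ∀ n, 1 < bs n)
    (hbound : ∀ x : ℝ, treeMeasure ts bs (Set.Icc x (x + 1)) ≤ ENNReal.ofReal C)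
    (z : ℂ) (hz : 0 < z.im) (a : ℝ) (ha : a ∉ Set.range ts)
    (uD : ℝ → ℂ)
    (huD : IsInterfaceSolution ts bs z (Ici a) uD)
    (hDa : uD a = 0) (hDa' : derivWithin uD (offAtoms ts (Ici a)) a = 1) :
    (∫⁻ r in Ioi a, ENNReal.ofReal (‖uD r‖ ^ 2)) = ⊤ ∧
    Tendsto (fun b : ℝ => 1 / (2 * z.im * ∫ r in a..b, ‖uD r‖ ^ 2)) atTop (nhds 0) :=
  limit_point_case_general γ hγ ts bs hsep hbs z hz a ha uD huD hDa hDa'
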